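/- Let V ∈ L^1_{loc}(ℝⁿ) be compactly supported in a bounded set Ω with ‖V‖_{L²} and the diameter of Ω controlled by constants. For ξ ∈ ℝⁿ and τ ≥ 1, the entire extension of the Fourier transform satisfies |V̂(ξ)| ≤ |V̂((1 + i/τ)ξ)| + c τ^{-1} |ξ| e^{c τ^{-1} |ξ|}, where V̂(z) = ∫ e^{-i z·x} V(x) dx and c depends only on Ω. -/

import Mathlib

open MeasureTheory Complex

noncomputable section

lemma aux_abs_exp_sub_one (t : ℝ) : |Real.exp t - 1| ≤ |t| * Real.exp |t| := by
  rcases le_or_gt 0 t with ht | ht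
  · rw [_root_.abs_of_nonneg (by nlinarith [Real.exp_pos t, Real.one_le_exp ht] : 0 ≤ Real.exp t - 1),
      _root_.abs_of_nonneg ht]
    have h1 : Real.exp (-t) * Real.exp t = 1 := by rw [← Real.exp_add]; simp
    nlinarith [Real.add_one_le_exp (-t), Real.exp_pos t]
  · have h2 : Real.exp t < 1 := Real.exp_lt_one_iff.mpr ht
    rw [_root_.abs_of_nonpos (by linarith), abs_of_neg ht]
    nlinarith [Real.add_one_le_exp t, Real.one_le_exp (le_of_lt (neg_pos.mpr ht)),
      Real.exp_pos t]

set_option maxHeartbeats 1000000 in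
/-- Let V ∈ L¹ be supported in a bounded set Ω with ‖V‖_{L¹} and the
size of Ω controlled by a constant M. For ξ ∈ ℝⁿ and τ ≥ 1, the entire (Fourier–Laplace)
extension V̂(w ξ) = ∫ e^{−i w ξ·x} V(x) dx satisfies
|V̂(ξ)| ≤ |V̂((1 + i/τ)ξ)| + c τ⁻¹ |ξ| e^{c τ⁻¹ |ξ|}
with c depending only on the constants controlling Ω and V. -/
theorem stmt_15 (n : ℕ) (M : ℝ) (hM : 0 < M) :
    ∃ c > (0 : ℝ),
      ∀ (V : EuclideanSpace ℝ (Fin n) → ℂ) (Ω : Set (EuclideanSpace ℝ (Fin n)))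
        (ξ : EuclideanSpace ℝ (Fin n)) (τ : ℝ),
        Bornology.IsBounded Ω → Ω ⊆ Metric.ball 0 M →
        Integrable V → (∀ x ∉ Ω, V x = 0) →
        (∫ x, ‖V x‖) ≤ M → (eLpNorm V 2 volume).toReal ≤ M → 1 ≤ τ →
        ‖∫ x, Complex.exp (-Complex.I * ((1 : ℂ)) * ((inner ℝ ξ x : ℝ) : ℂ)) * V x‖ ≤
          ‖∫ x, Complex.exp (-Complex.I * ((1 : ℂ) + Complex.I / (τ : ℂ)) *
              ((inner ℝ ξ x : ℝ) : ℂ)) * V x‖ +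
            c * τ⁻¹ * ‖ξ‖ * Real.exp (c * τ⁻¹ * ‖ξ‖) := by
  refine ⟨M ^ 2 + M + 1, by positivity, ?_⟩
  intro V Ω ξ τ hΩb hΩM hV hsupp hL1 _hL2 hτ
  have hτ0 : (0 : ℝ) < τ := lt_of_lt_of_le one_pos hτ
  set s : EuclideanSpace ℝ (Fin n) → ℝ := fun x => (inner ℝ ξ x : ℝ) with hs
  have hscont : Continuous s := continuous_const.inner continuous_id
  -- bound on |s x| on the support of V
  have hsbd : ∀ x, V x ≠ 0 → |s x| ≤ ‖ξ‖ * M := by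
    intro x hx
    have hxΩ : x ∈ Ω := by by_contra h; exact hx (hsupp x h)
    have hxM : ‖x‖ < M := by simpa using hΩM hxΩ
    calc |s x| ≤ ‖ξ‖ * ‖x‖ := abs_real_inner_le_norm ξ x
      _ ≤ ‖ξ‖ * M := by nlinarith [norm_nonneg ξ, norm_nonneg x]
  -- integrability of the two integrands
  have hint : ∀ w : ℂ, Integrable (fun x => Complex.exp (-Complex.I * w * (s x : ℂ)) * V x) := by
    intro w
    refine Integrable.mono' (hV.norm.const_mul (Real.exp (‖w‖ * (‖ξ‖ * M)))) ?_ ?_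
    · exact ((Complex.continuous_exp.comp
        (continuous_const.mul (Complex.continuous_ofReal.comp hscont))).aestronglyMeasurable).mul
        hV.aestronglyMeasurable
    · filter_upwards with x
      by_cases hx : V x = 0
      · simp [hx]
      · rw [norm_mul]
        have h1 : ‖Complex.exp (-Complex.I * w * (s x : ℂ))‖ ≤
            Real.exp (‖w‖ * (‖ξ‖ * M)) := by
          rw [Complex.norm_exp]
          apply Real.exp_le_exp.mpr
          calc (-Complex.I * w * (s x : ℂ)).re ≤ ‖-Complex.I * w * (s x : ℂ)‖ :=
                Complex.re_le_norm _
            _ = ‖w‖ * |s x| := by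
                simp [Complex.norm_real]
            _ ≤ ‖w‖ * (‖ξ‖ * M) := by
                have := hsbd x hx
                nlinarith [norm_nonneg w, abs_nonneg (s x)]
        calc ‖Complex.exp (-Complex.I * w * (s x : ℂ))‖ * ‖V x‖
            ≤ Real.exp (‖w‖ * (‖ξ‖ * M)) * ‖V x‖ := by
              nlinarith [norm_nonneg (V x)]
          _ = _ := rfl
  have h1 := hint 1
  have h2 := hint (1 + Complex.I / τ)
  set B : ℝ := M * τ⁻¹ * ‖ξ‖ * Real.exp (M * τ⁻¹ * ‖ξ‖) with hB
  -- pointwise bound on the difference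
  have hpt : ∀ x, ‖Complex.exp (-Complex.I * 1 * (s x : ℂ)) * V x -
      Complex.exp (-Complex.I * (1 + Complex.I / τ) * (s x : ℂ)) * V x‖ ≤ B * ‖V x‖ := by
    intro x
    by_cases hx : V x = 0
    · simp [hx]
    · rw [← sub_mul, norm_mul]
      have key : Complex.exp (-Complex.I * (1 + Complex.I / τ) * (s x : ℂ)) =
          Complex.exp (-Complex.I * 1 * (s x : ℂ)) * (Real.exp (s x / τ) : ℂ) := by
        rw [Complex.ofReal_exp, ← Complex.exp_add]
        congr 1
        push_cast
        field_simp
        ring_nf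
        rw [Complex.I_sq]
        ring
      rw [key]
      have : Complex.exp (-Complex.I * 1 * (s x : ℂ)) -
          Complex.exp (-Complex.I * 1 * (s x : ℂ)) * (Real.exp (s x / τ) : ℂ) =
          Complex.exp (-Complex.I * 1 * (s x : ℂ)) * (1 - (Real.exp (s x / τ) : ℂ)) := by ring
      rw [this, norm_mul]
      have habs1 : ‖Complex.exp (-Complex.I * 1 * (s x : ℂ))‖ = 1 := by
        rw [Complex.norm_exp]
        simp
      rw [habs1, one_mul]
      have : ‖(1 : ℂ) - (Real.exp (s x / τ) : ℂ)‖ = |Real.exp (s x / τ) - 1| := by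
        rw [← Complex.ofReal_one, ← Complex.ofReal_sub, Complex.norm_real, Real.norm_eq_abs,
          abs_sub_comm]
      rw [this]
      have hb1 : |s x / τ| ≤ M * τ⁻¹ * ‖ξ‖ := by
        rw [abs_div, abs_of_pos hτ0, div_eq_mul_inv]
        have := hsbd x hx
        nlinarith [inv_pos.mpr hτ0, abs_nonneg (s x)]
      have hb2 : |Real.exp (s x / τ) - 1| ≤ B := by
        calc |Real.exp (s x / τ) - 1| ≤ |s x / τ| * Real.exp |s x / τ| :=
              aux_abs_exp_sub_one _
          _ ≤ (M * τ⁻¹ * ‖ξ‖) * Real.exp (M * τ⁻¹ * ‖ξ‖) := by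
              apply mul_le_mul hb1 (Real.exp_le_exp.mpr hb1) (Real.exp_pos _).le
              positivity
          _ = B := by rw [hB]
      nlinarith [norm_nonneg (V x), abs_nonneg (Real.exp (s x / τ) - 1),
        (by positivity : (0:ℝ) ≤ B)]
  -- assemble
  have hBM : ‖(∫ x, Complex.exp (-Complex.I * 1 * (s x : ℂ)) * V x) -
      ∫ x, Complex.exp (-Complex.I * (1 + Complex.I / τ) * (s x : ℂ)) * V x‖ ≤ B * M := by
    rw [← integral_sub h1 h2]
    calc ‖∫ x, (Complex.exp (-Complex.I * 1 * (s x : ℂ)) * V x -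
          Complex.exp (-Complex.I * (1 + Complex.I / τ) * (s x : ℂ)) * V x)‖
        ≤ ∫ x, ‖Complex.exp (-Complex.I * 1 * (s x : ℂ)) * V x -
          Complex.exp (-Complex.I * (1 + Complex.I / τ) * (s x : ℂ)) * V x‖ :=
          norm_integral_le_integral_norm _
      _ ≤ ∫ x, B * ‖V x‖ := by
          apply integral_mono_of_nonneg (Filter.Eventually.of_forall fun x => norm_nonneg _)
            (hV.norm.const_mul B)
          exact Filter.Eventually.of_forall hpt
      _ = B * ∫ x, ‖V x‖ := integral_const_mul _ _
      _ ≤ B * M := by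
          have hB0 : (0 : ℝ) ≤ B := by positivity
          nlinarith
  have hfin : B * M ≤ (M ^ 2 + M + 1) * τ⁻¹ * ‖ξ‖ *
      Real.exp ((M ^ 2 + M + 1) * τ⁻¹ * ‖ξ‖) := by
    rw [hB]
    have h1' : M * τ⁻¹ * ‖ξ‖ * M ≤ (M ^ 2 + M + 1) * τ⁻¹ * ‖ξ‖ := by
      have : (0:ℝ) ≤ τ⁻¹ * ‖ξ‖ := by positivity
      nlinarith
    have h2' : Real.exp (M * τ⁻¹ * ‖ξ‖) ≤ Real.exp ((M ^ 2 + M + 1) * τ⁻¹ * ‖ξ‖) := by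
      apply Real.exp_le_exp.mpr
      have : (0:ℝ) ≤ τ⁻¹ * ‖ξ‖ := by positivity
      nlinarith
    calc M * τ⁻¹ * ‖ξ‖ * Real.exp (M * τ⁻¹ * ‖ξ‖) * M
        = (M * τ⁻¹ * ‖ξ‖ * M) * Real.exp (M * τ⁻¹ * ‖ξ‖) := by ring
      _ ≤ ((M ^ 2 + M + 1) * τ⁻¹ * ‖ξ‖) * Real.exp ((M ^ 2 + M + 1) * τ⁻¹ * ‖ξ‖) :=
          mul_le_mul h1' h2' (Real.exp_pos _).le (by positivity)
  calc ‖∫ x, Complex.exp (-Complex.I * 1 * (s x : ℂ)) * V x‖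
      ≤ ‖∫ x, Complex.exp (-Complex.I * (1 + Complex.I / τ) * (s x : ℂ)) * V x‖ +
        ‖(∫ x, Complex.exp (-Complex.I * 1 * (s x : ℂ)) * V x) -
          ∫ x, Complex.exp (-Complex.I * (1 + Complex.I / τ) * (s x : ℂ)) * V x‖ := by
        have := norm_sub_norm_le (∫ x, Complex.exp (-Complex.I * 1 * (s x : ℂ)) * V x)
          (∫ x, Complex.exp (-Complex.I * (1 + Complex.I / τ) * (s x : ℂ)) * V x)
        linarith
    _ ≤ _ := by
        have := le_trans hBM hfin
        linarith

end
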